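/- arXiv:2101.10860 — 4 statements merged into one kernel-verified Lean document; each statement's English description precedes it below -/
import Mathlib

section
/- If ∏_{i=1}^{k} sinh(n_i x)/sinh(m_i x) ≡ 1 for all x > 0, where all n_i, m_i are nonzero reals, then the multiset {n_1,...,n_k} equals the multiset {ε_1 m_1,...,ε_k m_k} for some signs ε_i ∈ {±1} with ∏_{i=1}^k ε_i = 1. -/
/-!
Taking absolute values, `∏ sinh (|nᵢ| x) = ∏ sinh (|mᵢ| x)`. Since
`log sinh y = y - log 2 + log (1 - e^{-2y})` and the last term tends to `0`, letting `x → ∞`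
matches the sums and the cardinalities, and leaves `∑ log (1 - e^{-a x})` equal for the two
multisets. Multiplied by `e^{c x}`, where `c` is the least element, this sum tends to minus the
multiplicity of `c`; so `c` occurs on both sides, cancels, and induction gives
`{|nᵢ|} = {|mᵢ|}`. A permutation matching the absolute values provides the signs, whose product
is `∏ nᵢ / mᵢ`, and that is `1` by letting `x → 0`.
-/

open Filter Topology Real

theorem Fintype.exists_equiv_of_map_univ_eq {α β γ : Type*} [Fintype α] [Fintype β]
    {f : α → γ} {g : β → γ} (h : Finset.univ.val.map f = Finset.univ.val.map g) :
    ∃ e : α ≃ β, ∀ a, g (e a) = f a := by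
  classical
  refine ⟨Equiv.ofFiberEquiv fun c => Fintype.equivOfCardEq ?_, Equiv.ofFiberEquiv_map _⟩
  have := congrArg (Multiset.count c) h
  simp only [Multiset.count_map] at this
  simpa [Fintype.card_subtype, Finset.card, Finset.filter_val, eq_comm] using this

theorem Real.tendsto_log_one_sub_div :
    Tendsto (fun u => log (1 - u) / u) (𝓝[≠] 0) (𝓝 (-1)) := by
  have hd : HasDerivAt (fun u => log (1 - u)) (-1) 0 := by
    simpa using ((hasDerivAt_id (0 : ℝ)).const_sub 1).log (by norm_num)
  simpa [div_eq_inv_mul] using hd.tendsto_slope_zero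

theorem Real.tendsto_exp_mul_atTop_of_neg {p : ℝ} (hp : p < 0) :
    Tendsto (fun x => exp (p * x)) atTop (𝓝 0) :=
  tendsto_exp_atBot.comp (tendsto_id.const_mul_atTop_of_neg hp)

theorem eq_zero_of_tendsto_mul_add {p q : ℝ} (h : Tendsto (fun x => p * x + q) atTop (𝓝 0)) :
    p = 0 ∧ q = 0 := by
  have hp : p = 0 := by
    have hdiv : Tendsto (fun x => (p * x + q) * x⁻¹) atTop (𝓝 p) := by
      have := (tendsto_inv_atTop_zero (𝕜 := ℝ)).const_mul q |>.const_add p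
      rw [mul_zero, add_zero] at this
      refine this.congr' ?_
      filter_upwards [eventually_ne_atTop 0] with x hx
      field_simp
    simpa using tendsto_nhds_unique hdiv (by simpa using h.mul tendsto_inv_atTop_zero)
  subst hp
  exact ⟨rfl, by simpa using h⟩

theorem tendsto_sinh_mul_div_sinh_mul (a : ℝ) {b : ℝ} (hb : b ≠ 0) :
    Tendsto (fun x => sinh (a * x) / sinh (b * x)) (𝓝[≠] 0) (𝓝 (a / b)) := by
  have slope (c : ℝ) : Tendsto (fun x => x⁻¹ * sinh (c * x)) (𝓝[≠] 0) (𝓝 c) := by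
    simpa using ((hasDerivAt_id (0 : ℝ)).const_mul c).sinh.tendsto_slope_zero
  refine ((slope a).div (slope b) hb).congr' ?_
  filter_upwards [self_mem_nhdsWithin] with x hx
  exact mul_div_mul_left _ _ (inv_ne_zero hx)

theorem Real.log_sinh {y : ℝ} (hy : 0 < y) :
    log (sinh y) = y - log 2 + log (1 - exp (-2 * y)) := by
  have hfac : 0 < 1 - exp (-2 * y) := by
    rw [sub_pos, exp_lt_one_iff]; linarith
  have hsinh : sinh y = exp y * (1 - exp (-2 * y)) / 2 := by
    rw [sinh_eq, mul_sub, ← exp_add]; ring_nf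
  rw [hsinh, log_div (by positivity) two_ne_zero, log_mul (exp_pos y).ne' hfac.ne', log_exp]
  ring

theorem tendsto_exp_mul_log_one_sub_exp {a c : ℝ} (hc : 0 < c) (hca : c ≤ a) :
    Tendsto (fun x => exp (c * x) * log (1 - exp (-a * x))) atTop
      (𝓝 (if a = c then -1 else 0)) := by
  have ha : 0 < a := hc.trans_le hca
  have hu : Tendsto (fun x => exp (-a * x)) atTop (𝓝[≠] 0) :=
    tendsto_nhdsWithin_of_tendsto_nhds_of_eventually_within _
      (tendsto_exp_mul_atTop_of_neg (neg_neg_of_pos ha))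
      (Eventually.of_forall fun x => (exp_pos _).ne')
  have hexp : Tendsto (fun x => exp ((c - a) * x)) atTop (𝓝 (if a = c then 1 else 0)) := by
    split_ifs with h
    · simp [h]
    · exact tendsto_exp_mul_atTop_of_neg (sub_neg.2 (hca.lt_of_ne (Ne.symm h)))
  convert (tendsto_log_one_sub_div.comp hu).mul hexp using 1
  · ext x
    have hsplit : exp ((c - a) * x) = exp (c * x) * exp (-a * x) := by
      rw [← exp_add]; ring_nf
    simp only [Function.comp_apply, hsplit]
    field_simp
  · split_ifs <;> simp

noncomputable def sumLogOneSubExp (A : Multiset ℝ) (x : ℝ) : ℝ :=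
  (A.map fun a => log (1 - exp (-a * x))).sum

theorem sumLogOneSubExp_cons (c : ℝ) (A : Multiset ℝ) (x : ℝ) :
    sumLogOneSubExp (c ::ₘ A) x = log (1 - exp (-c * x)) + sumLogOneSubExp A x := by
  simp [sumLogOneSubExp]

theorem tendsto_sumLogOneSubExp_atTop {A : Multiset ℝ} (hA : ∀ a ∈ A, 0 < a) :
    Tendsto (sumLogOneSubExp A) atTop (𝓝 0) := by
  have := tendsto_multiset_sum A fun a ha =>
    ((tendsto_exp_mul_atTop_of_neg (neg_neg_of_pos (hA a ha))).const_sub 1).log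
      (by norm_num : (1 : ℝ) - 0 ≠ 0)
  unfold sumLogOneSubExp
  simpa using this

theorem tendsto_exp_mul_sumLogOneSubExp {A : Multiset ℝ} {c : ℝ} (hc : 0 < c)
    (hA : ∀ a ∈ A, c ≤ a) :
    Tendsto (fun x => exp (c * x) * sumLogOneSubExp A x) atTop (𝓝 (-(A.count c))) := by
  classical
  have := tendsto_multiset_sum A fun a ha => tendsto_exp_mul_log_one_sub_exp hc (hA a ha)
  rw [Multiset.sum_map_eq_nsmul_single c fun a hne _ => if_neg hne] at this
  simpa [sumLogOneSubExp, Multiset.sum_map_mul_left] using this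

theorem exists_mem_mem_of_sumLogOneSubExp_eventuallyEq {A B : Multiset ℝ}
    (hA : ∀ a ∈ A, 0 < a) (hB : ∀ b ∈ B, 0 < b)
    (h : sumLogOneSubExp A =ᶠ[atTop] sumLogOneSubExp B) (hAB : A + B ≠ 0) :
    ∃ c, c ∈ A ∧ c ∈ B := by
  classical
  obtain ⟨c, hc, hmin⟩ := (A + B).toFinset.exists_min_image id
    (Multiset.toFinset_nonempty.2 hAB)
  simp only [Multiset.mem_toFinset, Multiset.mem_add, id] at hc hmin
  have hc0 : 0 < c := hc.elim (hA c) (hB c)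
  have hcount : A.count c = B.count c := by
    have hlimA := tendsto_exp_mul_sumLogOneSubExp hc0 fun a ha => hmin a (.inl ha)
    have hlimB := tendsto_exp_mul_sumLogOneSubExp hc0 fun b hb => hmin b (.inr hb)
    have := tendsto_nhds_unique (hlimA.congr' (h.mono fun x hx => by rw [hx])) hlimB
    exact_mod_cast neg_injective this
  have hmem : c ∈ A ↔ c ∈ B := by rw [← Multiset.count_pos, ← Multiset.count_pos, hcount]
  exact ⟨c, hc.elim id hmem.2, hc.elim hmem.1 id⟩

theorem eq_of_sumLogOneSubExp_eventuallyEq {A B : Multiset ℝ}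
    (hA : ∀ a ∈ A, 0 < a) (hB : ∀ b ∈ B, 0 < b)
    (h : sumLogOneSubExp A =ᶠ[atTop] sumLogOneSubExp B) : A = B := by
  induction A using Multiset.strongInductionOn generalizing B with
  | ih A ih =>
  by_cases hAB : A + B = 0
  · obtain ⟨rfl, rfl⟩ := add_eq_zero.1 hAB
    rfl
  obtain ⟨c, hcA, hcB⟩ := exists_mem_mem_of_sumLogOneSubExp_eventuallyEq hA hB h hAB
  obtain ⟨A, rfl⟩ := Multiset.exists_cons_of_mem hcA
  obtain ⟨B, rfl⟩ := Multiset.exists_cons_of_mem hcB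
  congr 1
  refine ih A (Multiset.lt_cons_self A c) (fun a ha => hA a (Multiset.mem_cons_of_mem ha))
    (fun b hb => hB b (Multiset.mem_cons_of_mem hb)) ?_
  filter_upwards [h] with x hx
  rwa [sumLogOneSubExp_cons, sumLogOneSubExp_cons, add_right_inj] at hx

theorem log_prod_map_sinh_mul {A : Multiset ℝ} (hA : ∀ a ∈ A, 0 < a) {x : ℝ} (hx : 0 < x) :
    log (A.map fun a => sinh (a * x)).prod
      = A.sum * x - A.card * log 2 + sumLogOneSubExp A (2 * x) := by
  rw [log_multiset_prod (by simpa using fun a ha => (sinh_pos_iff.2 (mul_pos (hA a ha) hx)).ne'),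
    Multiset.map_map, Function.comp_def,
    Multiset.map_congr rfl fun a ha => log_sinh (mul_pos (hA a ha) hx)]
  simp only [sumLogOneSubExp, Multiset.sum_map_add, Multiset.sum_map_sub,
    Multiset.sum_map_mul_right]
  rw [Multiset.map_id', Multiset.map_const', Multiset.sum_replicate, nsmul_eq_mul]
  congr 1
  refine congrArg Multiset.sum (Multiset.map_congr rfl fun a _ => ?_)
  ring_nf

theorem Multiset.eq_of_prod_map_sinh_mul_eq {A B : Multiset ℝ}
    (hA : ∀ a ∈ A, 0 < a) (hB : ∀ b ∈ B, 0 < b)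
    (h : ∀ x > 0, (A.map fun a => sinh (a * x)).prod = (B.map fun b => sinh (b * x)).prod) :
    A = B := by
  have hlog (x : ℝ) (hx : 0 < x) :
      A.sum * x - A.card * log 2 + sumLogOneSubExp A (2 * x)
        = B.sum * x - B.card * log 2 + sumLogOneSubExp B (2 * x) := by
    rw [← log_prod_map_sinh_mul hA hx, ← log_prod_map_sinh_mul hB hx, h x hx]
  have hS (C : Multiset ℝ) (hC : ∀ c ∈ C, 0 < c) :=
    (tendsto_sumLogOneSubExp_atTop hC).comp (tendsto_id.const_mul_atTop two_pos)
  have hlim :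
      Tendsto (fun x => (A.sum - B.sum) * x + (B.card - A.card) * log 2) atTop (𝓝 0) := by
    have := (hS B hB).sub (hS A hA)
    rw [sub_zero] at this
    refine this.congr' ?_
    filter_upwards [eventually_gt_atTop 0] with x hx
    simp only [Function.comp_apply, id]
    linarith [hlog x hx]
  obtain ⟨hsum, hcard⟩ := eq_zero_of_tendsto_mul_add hlim
  refine eq_of_sumLogOneSubExp_eventuallyEq hA hB ?_
  filter_upwards [eventually_gt_atTop 0] with x hx
  have := hlog (x / 2) (half_pos hx)
  rw [mul_div_cancel₀ x two_ne_zero, sub_eq_zero.1 hsum] at this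
  linarith

/-- If `∏ sinh(nᵢ x)/sinh(mᵢ x) ≡ 1` for all `x > 0` with all `nᵢ, mᵢ` nonzero, then
the multiset `{nᵢ}` equals `{εᵢ mᵢ}` for some signs `εᵢ = ±1` with `∏ εᵢ = 1`. -/
theorem stmt_1 (k : ℕ) (n m : Fin k → ℝ)
    (hn : ∀ i, n i ≠ 0) (hm : ∀ i, m i ≠ 0)
    (hQ : ∀ x : ℝ, 0 < x →
      ∏ i, Real.sinh (n i * x) / Real.sinh (m i * x) = 1) :
    ∃ ε : Fin k → ℝ, (∀ i, ε i = 1 ∨ ε i = -1) ∧ (∏ i, ε i = 1) ∧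
      (Finset.univ.val.map n = Finset.univ.val.map (fun i => ε i * m i)) := by
  have hratio : ∏ i, n i / m i = 1 := by
    have hlim : Tendsto (fun x => ∏ i, sinh (n i * x) / sinh (m i * x)) (𝓝[>] 0)
        (𝓝 (∏ i, n i / m i)) := tendsto_finsetProd Finset.univ fun i _ =>
      (tendsto_sinh_mul_div_sinh_mul (n i) (hm i)).mono_left (nhdsGT_le_nhdsNE 0)
    exact tendsto_nhds_unique hlim
      (tendsto_const_nhds.congr' (eventually_nhdsWithin_of_forall fun x hx => (hQ x hx).symm))
  have habs : Finset.univ.val.map (fun i => |m i|) = Finset.univ.val.map (fun i => |n i|) := by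
    refine Multiset.eq_of_prod_map_sinh_mul_eq (by simpa using hm) (by simpa using hn)
      fun x hx => ?_
    have hprod := hQ x hx
    rw [Finset.prod_div_distrib, div_eq_one_iff_eq (Finset.prod_ne_zero_iff.2 fun i _ =>
      sinh_ne_zero.2 (mul_ne_zero (hm i) hx.ne'))] at hprod
    simp only [Multiset.map_map, Function.comp_def, ← Finset.prod_eq_multiset_prod]
    simpa only [Finset.abs_prod, abs_sinh, abs_mul, abs_of_pos hx] using congrArg abs hprod.symm
  obtain ⟨e, he⟩ := Fintype.exists_equiv_of_map_univ_eq habs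
  refine ⟨fun i => n (e i) / m i, fun i => ?_, ?_, ?_⟩
  · rw [← abs_eq zero_le_one, abs_div, he i, div_self (abs_ne_zero.2 (hm i))]
  · rw [Finset.prod_div_distrib, e.prod_comp n, ← Finset.prod_div_distrib, hratio]
  · simp only [div_mul_cancel₀ _ (hm _)]
    conv_lhs => rw [← Multiset.map_univ_val_equiv e, Multiset.map_map]
    rfl
end

section
/- Let |n_k| = max({|n_1|,...,|n_k|} ∪ {|m_1|,...,|m_k|}) with all n_i, m_i nonzero reals, and suppose ∏_{i=1}^k sinh(n_i x)/sinh(m_i x) ≡ 1. Then there exists an index j with m_j = n_k or m_j = -n_k. -/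
/-!
Evaluate the identity at `z₀ = πi / n_{i₀}`, where `sinh (c z₀) = i sin (π c / n_{i₀})`.
The numerator factor `sinh (n_{i₀} z₀) = i sin π` vanishes. If no `m_j` were `± n_{i₀}`, then
every `m_j / n_{i₀}` would lie in `(-1, 0) ∪ (0, 1)`, so no denominator would vanish at `z₀`,
and the identity would give `0 = 1`.
-/

open Complex

lemma Real.sin_pi_mul_ne_zero {t : ℝ} (h0 : t ≠ 0) (h1 : |t| < 1) :
    Real.sin (Real.pi * t) ≠ 0 := by
  rw [Ne, Real.sin_eq_zero_iff]
  rintro ⟨k, hk⟩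
  have hkt : (k : ℝ) = t := mul_right_cancel₀ Real.pi_ne_zero (by rw [hk, mul_comm])
  have hk0 : k = 0 := by
    rw [← Int.abs_lt_one_iff]
    exact_mod_cast hkt ▸ h1
  exact h0 (by rw [← hkt, hk0, Int.cast_zero])

lemma Complex.sinh_mul_pi_mul_I_div (c a : ℝ) :
    sinh (c * (Real.pi * I / a)) = Real.sin (Real.pi * (c / a)) * I := by
  rw [ofReal_sin, ← sinh_mul_I]
  congr 1
  push_cast
  ring

lemma Complex.sinh_self_mul_pi_mul_I_div {a : ℝ} (ha : a ≠ 0) :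
    sinh (a * (Real.pi * I / a)) = 0 := by
  rw [sinh_mul_pi_mul_I_div, div_self ha, mul_one, Real.sin_pi, ofReal_zero, zero_mul]

lemma Complex.sinh_mul_pi_mul_I_div_ne_zero {c a : ℝ} (hc : c ≠ 0) (hca : |c| < |a|) :
    sinh (c * (Real.pi * I / a)) ≠ 0 := by
  have ha : a ≠ 0 := abs_pos.1 ((abs_nonneg c).trans_lt hca)
  rw [sinh_mul_pi_mul_I_div]
  refine mul_ne_zero (ofReal_ne_zero.2 (Real.sin_pi_mul_ne_zero (div_ne_zero hc ha) ?_)) I_ne_zero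
  rwa [abs_div, div_lt_one (abs_pos.2 ha)]

/-- If `|n i₀|` is maximal among all `|nᵢ|, |mᵢ|` (all nonzero), and
`∏ sinh(nᵢ z)/sinh(mᵢ z) ≡ 1` as meromorphic functions (i.e. wherever the
denominator is nonzero), then some `mⱼ` equals `± n i₀`. -/
theorem stmt_2 (k : ℕ) (n m : Fin k → ℝ) (i₀ : Fin k)
    (hn : ∀ i, n i ≠ 0) (hm : ∀ i, m i ≠ 0)
    (hmax : ∀ i, |n i| ≤ |n i₀| ∧ |m i| ≤ |n i₀|)
    (hQ : ∀ z : ℂ, (∀ i, Complex.sinh ((m i : ℂ) * z) ≠ 0) →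
      ∏ i, Complex.sinh ((n i : ℂ) * z) / Complex.sinh ((m i : ℂ) * z) = 1) :
    ∃ j, m j = n i₀ ∨ m j = -n i₀ := by
  by_contra! hne
  have hlt : ∀ i, |m i| < |n i₀| := fun i =>
    (hmax i).2.lt_of_ne fun h => (abs_eq_abs.1 h).elim (hne i).1 (hne i).2
  have hprod := hQ _ fun i => sinh_mul_pi_mul_I_div_ne_zero (hm i) (hlt i)
  rw [Finset.prod_eq_zero (Finset.mem_univ i₀)
    (by rw [sinh_self_mul_pi_mul_I_div (hn i₀), zero_div])] at hprod
  exact zero_ne_one hprod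
end

section
/- For the rational function Q(α,β,γ) = [(α+βx+γy)(αc₁c₂+βc₂x+γy)(αc₁+βc₁c₂x+γy)]/[(αc₁+βx+γy)(α+βc₂x+γy)(αc₁c₂+βc₁c₂x+γy)], if c₁ ≠ 1 and c₂ ≠ 1 and c₁c₂ ≠ 1 and x ≠ 0 and y ≠ 0, then Q is not identically equal to 1 as a rational function of (α,β,γ). -/
/-- If `c₁ ≠ 1`, `c₂ ≠ 1`, `c₁c₂ ≠ 1`, `x ≠ 0`, `y ≠ 0`, then the `k = 3`
non-uniqueness factor `Q` is not identically 1 as a rational function, i.e.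
its numerator and denominator do not agree identically. -/
theorem stmt_4 (c₁ c₂ x y : ℝ) (hc₁ : c₁ ≠ 1) (hc₂ : c₂ ≠ 1) (hc₁₂ : c₁ * c₂ ≠ 1)
    (hx : x ≠ 0) (hy : y ≠ 0) :
    ¬ (∀ α β γ : ℝ,
      (α + β * x + γ * y) * (α * c₁ * c₂ + β * c₂ * x + γ * y) *
        (α * c₁ + β * c₁ * c₂ * x + γ * y) =
      (α * c₁ + β * x + γ * y) * (α + β * c₂ * x + γ * y) *
        (α * c₁ * c₂ + β * c₁ * c₂ * x + γ * y)) := by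
  intro h
  have h1 := h 1 1 1
  have key : (c₁ - 1) * (c₂ - 1) * (c₁ * c₂ - 1) * x * y = 0 := by
    linear_combination h1
  have := mul_ne_zero (mul_ne_zero (mul_ne_zero (mul_ne_zero
    (sub_ne_zero.mpr hc₁) (sub_ne_zero.mpr hc₂)) (sub_ne_zero.mpr hc₁₂)) hx) hy
  exact this key
end

section
/- Let Q = ∏_{i=1}^{3} (n_i α + x_i β + y_i γ)/(m_i α + z_i β + t_i γ) be identically 1 on each of the planes α=0, β=0, γ=0, with all appearing linear forms in two variables nonzero, and suppose Q is not identically 1. Then the induced cancellation permutations s and p on {1,2,3} (matching numerator factors with denominator factors on β=0 and γ=0 respectively) are fixed-point-free and distinct. -/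
private lemma mem3 (a b g j : Fin 3) (hab : a ≠ b) (hag : a ≠ g) (hbg : b ≠ g) :
    j = a ∨ j = b ∨ j = g := by omega

private lemma third3 : ∀ (a b : Fin 3), a ≠ b → ∃ g, a ≠ g ∧ b ≠ g := by decide

private lemma others3 : ∀ a : Fin 3, ∃ b g, a ≠ b ∧ a ≠ g ∧ b ≠ g := by decide

private lemma prod3 {M : Type*} [CommMonoid M] (f : Fin 3 → M) (a b g : Fin 3)
    (hab : a ≠ b) (hag : a ≠ g) (hbg : b ≠ g) :
    ∏ i, f i = f a * f b * f g := by
  have huniv : (Finset.univ : Finset (Fin 3)) = {a, b, g} := by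
    symm; apply Finset.eq_univ_of_card
    rw [Finset.card_insert_of_notMem (by simp [hab, hag]),
        Finset.card_insert_of_notMem (by simp [hbg]), Finset.card_singleton]; rfl
  rw [huniv, Finset.prod_insert (by simp [hab, hag]), Finset.prod_insert (by simp [hbg]),
      Finset.prod_singleton, mul_assoc]

private lemma nzprod (kk : Fin 3 → ℝ) (hk1 : ∏ i, kk i = 1) : ∀ i, kk i ≠ 0 := by
  intro i hi
  have h0 : ∏ j, kk j = 0 := Finset.prod_eq_zero (Finset.mem_univ i) hi
  rw [hk1] at h0; norm_num at h0

private lemma key_ally (n x y m c : Fin 3 → ℝ) (p : Equiv.Perm (Fin 3))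
    (hm' : ∀ i, m i = c i * n (p i)) (hx : ∀ i, x i = c i * x (p i))
    (hally : ∀ j, y j = 0) (hc1 : ∏ i, c i = 1) :
    ∀ α β γ : ℝ, ∏ i, (n i * α + x i * β + y i * γ) = ∏ i, (m i * α + x i * β + y i * γ) := by
  intro α β γ
  have hD : ∏ i, (m i * α + x i * β + y i * γ)
      = ∏ i, (c i * (n (p i) * α + x (p i) * β + y (p i) * γ)) := by
    refine Finset.prod_congr rfl fun i _ => ?_
    rw [hm' i, hx i, hally i, hally (p i)]; ring
  rw [hD, Finset.prod_mul_distrib, hc1, one_mul,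
      Equiv.prod_comp p (fun j => n j * α + x j * β + y j * γ)]

private lemma keyI2 (n x y m kk c : Fin 3 → ℝ) (p : Equiv.Perm (Fin 3)) (a b g : Fin 3)
    (hab : a ≠ b) (hag : a ≠ g) (hbg : b ≠ g)
    (hya : y a = 0) (hyb : y b = 0)
    (hna : n a ≠ 0) (hnb : n b ≠ 0) (hxa : x a ≠ 0) (hxb : x b ≠ 0)
    (hma : m a = kk a * n a) (hmb : m b = kk b * n b) (hmgn : m g = n g)
    (hmane : m a ≠ n a) (hmbne : m b ≠ n b)
    (hkab : kk a * kk b = 1)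
    (hm' : ∀ i, m i = c i * n (p i)) (hx : ∀ i, x i = c i * x (p i)) :
    ∀ α β γ : ℝ,
      (n a*α + x a*β + y a*γ) * (n b*α + x b*β + y b*γ) * (n g*α + x g*β + y g*γ)
      = (m a*α + x a*β + y a*γ) * (m b*α + x b*β + y b*γ) * (m g*α + x g*β + y g*γ) := by
  have R : ∀ i, m i * x (p i) = n (p i) * x i := fun i => by rw [hm' i, hx i]; ring
  have hmamb : m a * m b = n a * n b := by
    rw [hma, hmb]; linear_combination (n a * n b) * hkab
  have hstar : m a * x b = n b * x a := by
    rcases mem3 a b g (p a) hab hag hbg with hpa|hpa|hpa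
    · exfalso; have h := R a; rw [hpa] at h
      exact hmane (mul_right_cancel₀ hxa h)
    · have h := R a; rwa [hpa] at h
    · rcases mem3 a b g (p b) hab hag hbg with hpb|hpb|hpb
      · have h := R b; rw [hpb] at h
        have h5 : n a * (m a * x b) = n a * (n b * x a) := by
          linear_combination (-(m a)) * h + (x a) * hmamb
        exact mul_left_cancel₀ hna h5
      · exfalso; have h := R b; rw [hpb] at h
        exact hmbne (mul_right_cancel₀ hxb h)
      · exact absurd (p.injective (hpa.trans hpb.symm)) hab
  have hma0 : m a ≠ 0 := by
    rw [hma]; exact mul_ne_zero (left_ne_zero_of_mul_eq_one hkab) hna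
  have hstar' : m b * x a = n a * x b := by
    have h5 : m a * (m b * x a) = m a * (n a * x b) := by
      linear_combination x a * hmamb - n a * hstar
    exact mul_left_cancel₀ hma0 h5
  intro α β γ
  have e1 : x b * (m a*α + x a*β + y a*γ) = x a * (n b*α + x b*β + y b*γ) := by
    rw [hya, hyb]; linear_combination α * hstar
  have e2 : x a * (m b*α + x b*β + y b*γ) = x b * (n a*α + x a*β + y a*γ) := by
    rw [hya, hyb]; linear_combination α * hstar'
  apply mul_left_cancel₀ (mul_ne_zero hxa hxb)
  symm
  calc (x a * x b) * ((m a*α + x a*β + y a*γ) * (m b*α + x b*β + y b*γ) * (m g*α + x g*β + y g*γ))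
      = (x b * (m a*α + x a*β + y a*γ)) * (x a * (m b*α + x b*β + y b*γ)) * (m g*α + x g*β + y g*γ) := by
        ring
    _ = (x a * (n b*α + x b*β + y b*γ)) * (x b * (n a*α + x a*β + y a*γ)) * (m g*α + x g*β + y g*γ) := by
        rw [e1, e2]
    _ = (x a * x b) * ((n a*α + x a*β + y a*γ) * (n b*α + x b*β + y b*γ) * (n g*α + x g*β + y g*γ)) := by
        rw [hmgn]; ring

private lemma keyI (n x y m kk c : Fin 3 → ℝ) (p : Equiv.Perm (Fin 3))
    (h1 : ∀ i, (x i, y i) ≠ ((0 : ℝ), (0 : ℝ))) (h2 : ∀ i, (n i, y i) ≠ ((0 : ℝ), (0 : ℝ)))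
    (hy' : ∀ i, y i = kk i * y i) (hm'' : ∀ i, m i = kk i * n i)
    (hm' : ∀ i, m i = c i * n (p i)) (hx : ∀ i, x i = c i * x (p i))
    (hk1 : ∏ i, kk i = 1) (hc1 : ∏ i, c i = 1) :
    ∀ α β γ : ℝ, ∏ i, (n i * α + x i * β + y i * γ) = ∏ i, (m i * α + x i * β + y i * γ) := by
  have lemA : ∀ i, m i = n i → kk i = 1 := by
    intro i h
    by_cases hni : n i = 0
    · have hyi : y i ≠ 0 := fun h0 => h2 i (by rw [hni, h0])
      have h5 : kk i * y i = 1 * y i := by rw [← hy' i, one_mul]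
      exact mul_right_cancel₀ hyi h5
    · rw [hm'' i] at h
      have : kk i * n i = 1 * n i := by rw [h, one_mul]
      exact mul_right_cancel₀ hni this
  have lemB : ∀ i, m i ≠ n i → y i = 0 ∧ n i ≠ 0 ∧ x i ≠ 0 := by
    intro i h
    have hni : n i ≠ 0 := fun h0 => h (by simp [hm'' i, h0])
    have hki : kk i ≠ 1 := fun h0 => h (by rw [hm'' i, h0, one_mul])
    have hyi : y i = 0 := by
      by_contra h0
      apply hki
      have := hy' i
      have h5 : kk i * y i = 1 * y i := by rw [← this, one_mul]
      exact mul_right_cancel₀ h0 h5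
    exact ⟨hyi, hni, fun h0 => h1 i (by rw [h0, hyi])⟩
  by_cases hall : ∀ j, m j = n j
  · intro α β γ
    exact Finset.prod_congr rfl fun i _ => by rw [hall i]
  · push_neg at hall
    obtain ⟨a, ha⟩ := hall
    obtain ⟨b, g, hab, hag, hbg⟩ := others3 a
    have hk1' : kk a * kk b * kk g = 1 := by
      rw [← prod3 kk a b g hab hag hbg]; exact hk1
    by_cases hb : m b = n b <;> by_cases hg : m g = n g
    · exfalso
      have := hk1'
      rw [lemA b hb, lemA g hg, mul_one, mul_one] at this
      exact ha (by rw [hm'' a, this, one_mul])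
    · -- m b = n b, m g ≠ n g : use keyI2 with (a, g, b)
      obtain ⟨hyaz, hnaz, hxaz⟩ := lemB a ha
      obtain ⟨hygz, hngz, hxgz⟩ := lemB g hg
      have hkag : kk a * kk g = 1 := by
        have := hk1'
        rw [lemA b hb] at this
        linear_combination this
      intro α β γ
      rw [prod3 _ a g b hag hab hbg.symm, prod3 _ a g b hag hab hbg.symm]
      exact keyI2 n x y m kk c p a g b hag hab hbg.symm hyaz hygz hnaz hngz hxaz hxgz
        (hm'' a) (hm'' g) hb ha hg hkag hm' hx α β γ
    · -- m b ≠ n b, m g = n g : keyI2 with (a, b, g)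
      obtain ⟨hyaz, hnaz, hxaz⟩ := lemB a ha
      obtain ⟨hybz, hnbz, hxbz⟩ := lemB b hb
      have hkab : kk a * kk b = 1 := by
        have := hk1'
        rw [lemA g hg] at this
        linear_combination this
      intro α β γ
      rw [prod3 _ a b g hab hag hbg, prod3 _ a b g hab hag hbg]
      exact keyI2 n x y m kk c p a b g hab hag hbg hyaz hybz hnaz hnbz hxaz hxbz
        (hm'' a) (hm'' b) hg ha hb hkab hm' hx α β γ
    · -- all three differ : all y vanish
      have hally : ∀ j, y j = 0 := by
        intro j
        rcases mem3 a b g j hab hag hbg with hj|hj|hj <;> rw [hj]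
        exacts [(lemB a ha).1, (lemB b hb).1, (lemB g hg).1]
      exact key_ally n x y m c p hm' hx hally hc1

private lemma keyT (n x y m kk c : Fin 3 → ℝ) (p : Equiv.Perm (Fin 3)) (a b g : Fin 3)
    (hab : a ≠ b) (hag : a ≠ g) (hbg : b ≠ g)
    (h1 : ∀ i, (x i, y i) ≠ ((0 : ℝ), (0 : ℝ))) (h2 : ∀ i, (n i, y i) ≠ ((0 : ℝ), (0 : ℝ)))
    (h3 : ∀ i, (n i, x i) ≠ ((0 : ℝ), (0 : ℝ)))
    (hya : y a = kk a * y b) (hyb : y b = kk b * y a) (hyg : y g = kk g * y g)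
    (hma : m a = kk a * n b) (hmb : m b = kk b * n a) (hmg : m g = kk g * n g)
    (hm' : ∀ i, m i = c i * n (p i)) (hx : ∀ i, x i = c i * x (p i))
    (hk1 : ∏ i, kk i = 1) (hc1 : ∏ i, c i = 1) :
    ∀ α β γ : ℝ, ∏ i, (n i * α + x i * β + y i * γ) = ∏ i, (m i * α + x i * β + y i * γ) := by
  have hk0 := nzprod kk hk1
  have hc0 := nzprod c hc1
  have hk1' : kk a * kk b * kk g = 1 := by
    rw [← prod3 kk a b g hab hag hbg]; exact hk1
  have hc1' : c a * c b * c g = 1 := by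
    rw [← prod3 c a b g hab hag hbg]; exact hc1
  have R : ∀ i, m i * x (p i) = n (p i) * x i := fun i => by rw [hm' i, hx i]; ring
  by_cases hY : y a = 0 ∧ y g = 0
  · have hyb0 : y b = 0 := by rw [hyb, hY.1, mul_zero]
    have hally : ∀ j, y j = 0 := by
      intro j
      rcases mem3 a b g j hab hag hbg with hj|hj|hj <;> rw [hj]
      exacts [hY.1, hyb0, hY.2]
    exact key_ally n x y m c p hm' hx hally hc1
  · -- derive kk g = 1 and kk a * kk b = 1
    have hkgab : kk g = 1 ∧ kk a * kk b = 1 := by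
      by_cases hya0 : y a = 0
      · have hyg0 : y g ≠ 0 := fun h => hY ⟨hya0, h⟩
        have h1g : kk g = 1 := by
          have h5 : kk g * y g = 1 * y g := by rw [← hyg, one_mul]
          exact mul_right_cancel₀ hyg0 h5
        refine ⟨h1g, ?_⟩
        have := hk1'; rw [h1g, mul_one] at this; exact this
      · have hkab : kk a * kk b = 1 := by
          have h := hya
          rw [hyb] at h
          have h5 : (kk a * kk b) * y a = 1 * y a := by rw [one_mul]; linear_combination -h
          exact mul_right_cancel₀ hya0 h5
        refine ⟨?_, hkab⟩
        have := hk1'; rw [hkab, one_mul] at this; exact this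
    obtain ⟨hkg1, hkab⟩ := hkgab
    have hmgn : m g = n g := by rw [hmg, hkg1, one_mul]
    have himp : m b = n b → m a = n a := by
      intro h
      rw [hmb] at h; rw [hma]
      linear_combination (-(kk a)) * h + n a * hkab
    by_cases hmane : m a = n a
    · have hmbe : m b = n b := by
        have h := hmane
        rw [hma] at h; rw [hmb]
        linear_combination (-(kk b)) * h + n b * hkab
      intro α β γ
      exact Finset.prod_congr rfl fun i _ => by
        rcases mem3 a b g i hab hag hbg with hi|hi|hi <;> rw [hi]
        · rw [hmane]
        · rw [hmbe]
        · rw [hmgn]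
    · by_cases hxx : x b = kk b * x a
      · have hxa2 : x a = kk a * x b := by
          rw [hxx]; linear_combination (-(x a)) * hkab
        intro α β γ
        rw [prod3 _ a b g hab hag hbg, prod3 _ a b g hab hag hbg]
        have e1 : m a*α + x a*β + y a*γ = kk a * (n b*α + x b*β + y b*γ) := by
          rw [hma]
          nth_rewrite 1 [hxa2, hya]
          ring
        have e2 : m b*α + x b*β + y b*γ = kk b * (n a*α + x a*β + y a*γ) := by
          rw [hmb]
          nth_rewrite 1 [hxx, hyb]
          ring
        have e3 : m g*α + x g*β + y g*γ = n g*α + x g*β + y g*γ := by rw [hmgn]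
        rw [e1, e2, e3]
        linear_combination (-((n a*α + x a*β + y a*γ) * (n b*α + x b*β + y b*γ) * (n g*α + x g*β + y g*γ))) * hkab
      · exfalso
        have hmbne : m b ≠ n b := fun h => hmane (himp h)
        by_cases hya0 : y a = 0
        · -- Y0 block
          have hyb0 : y b = 0 := by rw [hyb, hya0, mul_zero]
          have hna : n a ≠ 0 := fun h => h2 a (by rw [h, hya0])
          have hnb : n b ≠ 0 := fun h => h2 b (by rw [h, hyb0])
          have hxa0 : x a ≠ 0 := fun h => h1 a (by rw [h, hya0])
          have hxb0 : x b ≠ 0 := fun h => h1 b (by rw [h, hyb0])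
          rcases mem3 a b g (p a) hab hag hbg with hpa|hpa|hpa
          · have h := R a; rw [hpa] at h
            exact hmane (mul_right_cancel₀ hxa0 h)
          · have h := R a; rw [hpa, hma] at h
            apply hxx
            have h5 : n b * x b = n b * (kk b * x a) := by
              linear_combination kk b * h - (n b * x b) * hkab
            exact mul_left_cancel₀ hnb h5
          · rcases mem3 a b g (p b) hab hag hbg with hpb|hpb|hpb
            · have h := R b; rw [hpb, hmb] at h
              apply hxx
              have h5 : n a * x b = n a * (kk b * x a) := by linear_combination -h
              exact mul_left_cancel₀ hna h5
            · have h := R b; rw [hpb] at h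
              exact hmbne (mul_right_cancel₀ hxb0 h)
            · exact hab (p.injective (hpa.trans hpb.symm))
        · -- Y1 block
          have hyb0 : y b ≠ 0 := fun h => hya0 (by rw [hya, h, mul_zero])
          rcases mem3 a b g (p a) hab hag hbg with hpa|hpa|hpa
          · have hxa0 : x a = 0 := by
              by_contra h0
              have h := R a; rw [hpa] at h
              exact hmane (mul_right_cancel₀ h0 h)
            have hxb0 : x b ≠ 0 := fun h => hxx (by rw [h, hxa0, mul_zero])
            rcases mem3 a b g (p b) hab hag hbg with hpb|hpb|hpb
            · have h := R b; rw [hpb, hxa0] at h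
              have hna0 : n a = 0 := by
                rcases mul_eq_zero.mp (h.symm.trans (mul_zero (m b))) with h'|h'
                · exact h'
                · exact absurd h' hxb0
              exact h3 a (by rw [hna0, hxa0])
            · have h := R b; rw [hpb] at h
              exact hmbne (mul_right_cancel₀ hxb0 h)
            · have hpg : p g = b := by
                rcases mem3 a b g (p g) hab hag hbg with hpg|hpg|hpg
                · exact absurd (p.injective (hpg.trans hpa.symm)) hag.symm  -- p g = a = p a ⇒ g = a
                · exact hpg
                · exact absurd (p.injective (hpg.trans hpb.symm)) hbg.symm
              have hRg := R g; rw [hpg, hmgn] at hRg   -- n g * x b = n b * x g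
              have hRb := R b; rw [hpb] at hRb          -- m b * x g = n g * x b
              have hxg : x g = 0 := by
                by_contra h0
                apply hmbne
                have h5 : m b * x g = n b * x g := by rw [hRb, hRg]
                exact mul_right_cancel₀ h0 h5
              rw [hxg] at hRg
              have hng : n g = 0 := by
                rcases mul_eq_zero.mp (hRg.trans (by rw [mul_zero])) with h'|h'
                · exact h'
                · exact absurd h' hxb0
              exact h3 g (by rw [hng, hxg])
          · have hRa := R a; rw [hpa, hma] at hRa  -- kk a * n b * x b = n b * x a
            have hnb0 : n b = 0 := by
              by_contra h0
              apply hxx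
              have h5 : n b * x b = n b * (kk b * x a) := by
                linear_combination kk b * hRa - (n b * x b) * hkab
              exact mul_left_cancel₀ h0 h5
            have hma0 : m a = 0 := by rw [hma, hnb0, mul_zero]
            have hna0 : n a ≠ 0 := fun h => hmane (by rw [hma0, h])
            rcases mem3 a b g (p b) hab hag hbg with hpb|hpb|hpb
            · have hRb := R b; rw [hpb, hmb] at hRb  -- kk b * n a * x a = n a * x b
              apply hxx
              have h5 : n a * x b = n a * (kk b * x a) := by linear_combination -hRb
              exact mul_left_cancel₀ hna0 h5
            · exact absurd (p.injective (hpa.trans hpb.symm)) hab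
            · have hpg : p g = a := by
                rcases mem3 a b g (p g) hab hag hbg with hpg|hpg|hpg
                · exact hpg
                · exact absurd (p.injective (hpg.trans hpa.symm)) hag.symm
                · exact absurd (p.injective (hpg.trans hpb.symm)) hbg.symm
              have hncb := hm' b; rw [hpb, hmb] at hncb  -- kk b * n a = c b * n g
              have hncg := hm' g; rw [hpg, hmgn] at hncg -- n g = c g * n a
              have h6 : kk b = c b * c g := by
                have h5 : kk b * n a = (c b * c g) * n a := by
                  rw [hncg] at hncb; linear_combination hncb
                exact mul_right_cancel₀ hna0 h5
              have hxa' := hx a; rw [hpa] at hxa'  -- x a = c a * x b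
              apply hxx
              have h7 : kk b * c a = 1 := by
                rw [h6]; linear_combination hc1'
              rw [hxa']
              calc x b = (kk b * c a) * x b := by rw [h7, one_mul]
                _ = kk b * (c a * x b) := by ring
          · rcases mem3 a b g (p b) hab hag hbg with hpb|hpb|hpb
            · -- p a = g, p b = a
              have hRb := R b; rw [hpb, hmb] at hRb  -- kk b * n a * x a = n a * x b
              have hna0 : n a = 0 := by
                by_contra h0
                apply hxx
                have h5 : n a * x b = n a * (kk b * x a) := by linear_combination -hRb
                exact mul_left_cancel₀ h0 h5
              have hmb0 : m b = 0 := by rw [hmb, hna0, mul_zero]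
              have hnb0 : n b ≠ 0 := fun h => hmbne (by rw [hmb0, h])
              have hpg : p g = b := by
                rcases mem3 a b g (p g) hab hag hbg with hpg|hpg|hpg
                · exact absurd (p.injective (hpg.trans hpb.symm)) hbg.symm
                · exact hpg
                · exact absurd (p.injective (hpg.trans hpa.symm)) hag.symm
              have hnca := hm' a; rw [hpa, hma] at hnca  -- kk a * n b = c a * n g
              have hncg := hm' g; rw [hpg, hmgn] at hncg -- n g = c g * n b
              have h6 : kk a = c a * c g := by
                have h5 : kk a * n b = (c a * c g) * n b := by
                  rw [hncg] at hnca; linear_combination hnca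
                exact mul_right_cancel₀ hnb0 h5
              have hxb' := hx b; rw [hpb] at hxb'  -- x b = c b * x a
              apply hxx
              have h7 : kk a * c b = 1 := by
                rw [h6]; linear_combination hc1'
              have h8 : c b = kk b := by
                have h9 : kk a * c b = kk a * kk b := by rw [h7, hkab]
                exact mul_left_cancel₀ (hk0 a) h9
              rw [hxb', h8]
            · -- p a = g, p b = b
              have hRb := R b; rw [hpb] at hRb  -- m b * x b = n b * x b
              have hxb0 : x b = 0 := by
                by_contra h0
                exact hmbne (mul_right_cancel₀ h0 hRb)
              have hxa0 : x a ≠ 0 := fun h => hxx (by rw [hxb0, h, mul_zero])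
              have hpg : p g = a := by
                rcases mem3 a b g (p g) hab hag hbg with hpg|hpg|hpg
                · exact hpg
                · exact absurd (p.injective (hpg.trans hpb.symm)) hbg.symm
                · exact absurd (p.injective (hpg.trans hpa.symm)) hag.symm
              have hxg' := hx g; rw [hpg] at hxg'  -- x g = c g * x a
              have hxa' := hx a; rw [hpa, hxg'] at hxa'  -- x a = c a * (c g * x a)
              have hcacg : c a * c g = 1 := by
                have h5 : (c a * c g) * x a = 1 * x a := by rw [one_mul]; linear_combination -hxa'
                exact mul_right_cancel₀ hxa0 h5
              have hcb : c b = 1 := by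
                have h5 : c b * (c a * c g) = 1 := by linear_combination hc1'
                rw [hcacg, mul_one] at h5; exact h5
              have hncb := hm' b; rw [hpb, hcb, one_mul] at hncb
              exact hmbne hncb
            · exact absurd (p.injective (hpa.trans hpb.symm)) hab

private lemma keyC (n x y m kk c : Fin 3 → ℝ) (a b g : Fin 3)
    (hya : y a = kk a * y b) (hyb : y b = kk b * y g) (hyg : y g = kk g * y a)
    (hxa : x a = c a * x b) (hxb : x b = c b * x g) (hxg : x g = c g * x a)
    (hma : m a = kk a * n b) (hmb : m b = kk b * n g) (hmg : m g = kk g * n a)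
    (hda : kk a * n b = c a * n b) (hdb : kk b * n g = c b * n g) (hdg : kk g * n a = c g * n a)
    (hk1' : kk a * kk b * kk g = 1) (hc1' : c a * c b * c g = 1) :
    ∀ α β γ : ℝ,
      (n a*α + x a*β + y a*γ) * (n b*α + x b*β + y b*γ) * (n g*α + x g*β + y g*γ)
      = (m a*α + x a*β + y a*γ) * (m b*α + x b*β + y b*γ) * (m g*α + x g*β + y g*γ) := by
  have hka0 : kk a ≠ 0 := fun h => by rw [h] at hk1'; simp at hk1'
  have hkb0 : kk b ≠ 0 := fun h => by rw [h] at hk1'; simp at hk1'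
  have hkg0 : kk g ≠ 0 := fun h => by rw [h] at hk1'; simp at hk1'
  intro α β γ
  by_cases ha : kk a = c a <;> by_cases hb : kk b = c b <;> by_cases hg : kk g = c g
  · -- TTT
    have e1 : m a*α + x a*β + y a*γ = kk a * (n b*α + x b*β + y b*γ) := by
      rw [hma]; nth_rewrite 1 [hxa, hya, ← ha]; ring
    have e2 : m b*α + x b*β + y b*γ = kk b * (n g*α + x g*β + y g*γ) := by
      rw [hmb]; nth_rewrite 1 [hxb, hyb, ← hb]; ring
    have e3 : m g*α + x g*β + y g*γ = kk g * (n a*α + x a*β + y a*γ) := by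
      rw [hmg]; nth_rewrite 1 [hxg, hyg, ← hg]; ring
    rw [e1, e2, e3]
    linear_combination (-((n a*α + x a*β + y a*γ) * (n b*α + x b*β + y b*γ) * (n g*α + x g*β + y g*γ))) * hk1'
  · -- TTF : contradiction
    exfalso; apply hg
    have h := hk1'.trans hc1'.symm
    rw [← ha, ← hb] at h
    have h2 : kk g * (kk a * kk b) = c g * (kk a * kk b) := by linear_combination h
    exact mul_right_cancel₀ (mul_ne_zero hka0 hkb0) h2
  · -- TFT : contradiction
    exfalso; apply hb
    have h := hk1'.trans hc1'.symm
    rw [← ha, ← hg] at h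
    have h2 : kk b * (kk a * kk g) = c b * (kk a * kk g) := by linear_combination h
    exact mul_right_cancel₀ (mul_ne_zero hka0 hkg0) h2
  · -- TFF : n g = 0, n a = 0, kk b * kk g = c b * c g
    have hng : n g = 0 := by
      by_contra h0; exact hb (mul_right_cancel₀ h0 hdb)
    have hna : n a = 0 := by
      by_contra h0; exact hg (mul_right_cancel₀ h0 hdg)
    have hcc : c b * c g = kk b * kk g := by
      have h := hk1'.trans hc1'.symm
      rw [← ha] at h
      have h2 : kk a * (kk b * kk g) = kk a * (c b * c g) := by linear_combination h
      exact (mul_left_cancel₀ hka0 h2).symm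
    have e1 : m a*α + x a*β + y a*γ = kk a * (n b*α + x b*β + y b*γ) := by
      rw [hma]; nth_rewrite 1 [hxa, hya, ← ha]; ring
    have e2 : m b*α + x b*β + y b*γ = (kk b * kk g) * (n a*α + x a*β + y a*γ) := by
      rw [hmb, hng, hna]
      nth_rewrite 1 [hxb, hxg, hyb, hyg]
      linear_combination (x a * β) * hcc
    have e3 : m g*α + x g*β + y g*γ = n g*α + x g*β + y g*γ := by
      rw [hmg, hna, hng]; ring
    rw [e1, e2, e3]
    linear_combination (-((n a*α + x a*β + y a*γ) * (n b*α + x b*β + y b*γ) * (n g*α + x g*β + y g*γ))) * hk1'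
  · -- FTT : n b = 0 contradiction
    exfalso; apply ha
    have h := hk1'.trans hc1'.symm
    rw [← hb, ← hg] at h
    have h2 : kk a * (kk b * kk g) = c a * (kk b * kk g) := by linear_combination h
    exact mul_right_cancel₀ (mul_ne_zero hkb0 hkg0) h2
  · -- FTF : n b = 0, n a = 0, kk a * kk g = c a * c g
    have hnb : n b = 0 := by
      by_contra h0; exact ha (mul_right_cancel₀ h0 hda)
    have hna : n a = 0 := by
      by_contra h0; exact hg (mul_right_cancel₀ h0 hdg)
    have hcc : c a * c g = kk a * kk g := by
      have h := hk1'.trans hc1'.symm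
      rw [← hb] at h
      have h2 : kk b * (kk a * kk g) = kk b * (c a * c g) := by linear_combination h
      exact (mul_left_cancel₀ hkb0 h2).symm
    have e1 : m a*α + x a*β + y a*γ = n a*α + x a*β + y a*γ := by
      rw [hma, hnb, hna]; ring
    have e2 : m b*α + x b*β + y b*γ = kk b * (n g*α + x g*β + y g*γ) := by
      rw [hmb]; nth_rewrite 1 [hxb, hyb, ← hb]; ring
    have e3 : m g*α + x g*β + y g*γ = (kk a * kk g) * (n b*α + x b*β + y b*γ) := by
      rw [hmg, hna, hnb]
      nth_rewrite 1 [hxg, hxa, hyg, hya]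
      linear_combination (x b * β) * hcc
    rw [e1, e2, e3]
    linear_combination (-((n a*α + x a*β + y a*γ) * (n b*α + x b*β + y b*γ) * (n g*α + x g*β + y g*γ))) * hk1'
  · -- FFT : n b = 0, n g = 0, kk a * kk b = c a * c b
    have hnb : n b = 0 := by
      by_contra h0; exact ha (mul_right_cancel₀ h0 hda)
    have hng : n g = 0 := by
      by_contra h0; exact hb (mul_right_cancel₀ h0 hdb)
    have hcc : c a * c b = kk a * kk b := by
      have h := hk1'.trans hc1'.symm
      rw [← hg] at h
      have h2 : (kk a * kk b) * kk g = (c a * c b) * kk g := by linear_combination h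
      exact (mul_right_cancel₀ hkg0 h2).symm
    have e1 : m a*α + x a*β + y a*γ = (kk a * kk b) * (n g*α + x g*β + y g*γ) := by
      rw [hma, hnb, hng]
      nth_rewrite 1 [hxa, hxb, hya, hyb]
      linear_combination (x g * β) * hcc
    have e2 : m b*α + x b*β + y b*γ = n b*α + x b*β + y b*γ := by
      rw [hmb, hng, hnb]; ring
    have e3 : m g*α + x g*β + y g*γ = kk g * (n a*α + x a*β + y a*γ) := by
      rw [hmg]; nth_rewrite 1 [hxg, hyg, ← hg]; ring
    rw [e1, e2, e3]
    linear_combination (-((n a*α + x a*β + y a*γ) * (n b*α + x b*β + y b*γ) * (n g*α + x g*β + y g*γ))) * hk1'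
  · -- FFF : all n vanish
    have hnb : n b = 0 := by
      by_contra h0; exact ha (mul_right_cancel₀ h0 hda)
    have hng : n g = 0 := by
      by_contra h0; exact hb (mul_right_cancel₀ h0 hdb)
    have hna : n a = 0 := by
      by_contra h0; exact hg (mul_right_cancel₀ h0 hdg)
    rw [hma, hmb, hmg, hna, hnb, hng]; ring

private lemma key_fixed (n x y m kk c : Fin 3 → ℝ) (s p : Equiv.Perm (Fin 3))
    (h1 : ∀ i, (x i, y i) ≠ ((0 : ℝ), (0 : ℝ))) (h2 : ∀ i, (n i, y i) ≠ ((0 : ℝ), (0 : ℝ)))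
    (h3 : ∀ i, (n i, x i) ≠ ((0 : ℝ), (0 : ℝ)))
    (hy : ∀ i, y i = kk i * y (s i)) (hm : ∀ i, m i = kk i * n (s i))
    (hx : ∀ i, x i = c i * x (p i)) (hnc : ∀ i, kk i * n (s i) = c i * n (p i))
    (hk1 : ∏ i, kk i = 1) (hc1 : ∏ i, c i = 1) (i0 : Fin 3) (hfix : s i0 = i0) :
    ∀ α β γ : ℝ, ∏ i, (n i * α + x i * β + y i * γ) = ∏ i, (m i * α + x i * β + y i * γ) := by
  have hm' : ∀ i, m i = c i * n (p i) := fun i => (hm i).trans (hnc i)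
  obtain ⟨b0, g0, h1', h2', h3'⟩ := others3 i0
  have hsb : s b0 ≠ i0 := fun h => h1' (s.injective (h.trans hfix.symm)).symm
  rcases mem3 i0 b0 g0 (s b0) h1' h2' h3' with h|h|h
  · exact absurd h hsb
  · -- s = id
    have hsg : s g0 = g0 := by
      rcases mem3 i0 b0 g0 (s g0) h1' h2' h3' with h'|h'|h'
      · exact absurd (s.injective (h'.trans hfix.symm)) h2'.symm
      · exact absurd (s.injective (h'.trans h.symm)) h3'.symm
      · exact h'
    have hid : ∀ j, s j = j := by
      intro j
      rcases mem3 i0 b0 g0 j h1' h2' h3' with hj|hj|hj <;> rw [hj]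
      exacts [hfix, h, hsg]
    exact keyI n x y m kk c p h1 h2
      (fun i => by have h5 := hy i; rwa [hid i] at h5)
      (fun i => by have h5 := hm i; rwa [hid i] at h5) hm' hx hk1 hc1
  · -- s = (b0 g0)
    have hsg : s g0 = b0 := by
      rcases mem3 i0 b0 g0 (s g0) h1' h2' h3' with h'|h'|h'
      · exact absurd (s.injective (h'.trans hfix.symm)) h2'.symm
      · exact h'
      · exact absurd (s.injective (h'.trans h.symm).symm) h3'
    exact keyT n x y m kk c p b0 g0 i0 h3' h1'.symm h2'.symm h1 h2 h3
      (by have h5 := hy b0; rwa [h] at h5)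
      (by have h5 := hy g0; rwa [hsg] at h5)
      (by have h5 := hy i0; rwa [hfix] at h5)
      (by have h5 := hm b0; rwa [h] at h5)
      (by have h5 := hm g0; rwa [hsg] at h5)
      (by have h5 := hm i0; rwa [hfix] at h5)
      hm' hx hk1 hc1


/-- `k = 3` case: if `Q = ∏ (nᵢα + xᵢβ + yᵢγ)/(mᵢα + xᵢβ + yᵢγ)` is identically 1
on the three coordinate planes via cancellation permutations `s` (on `β = 0`, with
`yᵢ = kᵢ y_{s i}`, `mᵢ = kᵢ n_{s i}`) and `p` (on `γ = 0`, with `xᵢ = cᵢ x_{p i}`,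
`kᵢ n_{s i} = cᵢ n_{p i}`), `∏ kᵢ = ∏ cᵢ = 1`, and `Q` is not identically 1, then
`s` and `p` are fixed-point-free and distinct. -/
theorem stmt_12 (n x y m kk c : Fin 3 → ℝ) (s p : Equiv.Perm (Fin 3))
    (h1 : ∀ i, (x i, y i) ≠ (0, 0)) (h2 : ∀ i, (n i, y i) ≠ (0, 0))
    (h3 : ∀ i, (n i, x i) ≠ (0, 0))
    (hy : ∀ i, y i = kk i * y (s i)) (hm : ∀ i, m i = kk i * n (s i))
    (hx : ∀ i, x i = c i * x (p i)) (hnc : ∀ i, kk i * n (s i) = c i * n (p i))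
    (hk1 : ∏ i, kk i = 1) (hc1 : ∏ i, c i = 1)
    (hnot1 : ¬ ∀ α β γ : ℝ,
      ∏ i, (n i * α + x i * β + y i * γ) = ∏ i, (m i * α + x i * β + y i * γ)) :
    (∀ i, s i ≠ i) ∧ (∀ i, p i ≠ i) ∧ s ≠ p := by
  have hm' : ∀ i, m i = c i * n (p i) := fun i => (hm i).trans (hnc i)
  have part1 : ∀ i, s i ≠ i := fun i hfix =>
    hnot1 (key_fixed n x y m kk c s p h1 h2 h3 hy hm hx hnc hk1 hc1 i hfix)
  have part2 : ∀ i, p i ≠ i := by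
    intro i hfix
    apply hnot1
    have h1s : ∀ j, (y j, x j) ≠ ((0 : ℝ), (0 : ℝ)) := by
      intro j hj
      rw [Prod.mk.injEq] at hj
      exact h1 j (by rw [hj.2, hj.1])
    have key := key_fixed n y x m c kk p s h1s h3 h2 hx hm' hy
      (fun j => (hnc j).symm) hc1 hk1 i hfix
    intro α β γ
    calc ∏ j, (n j * α + x j * β + y j * γ)
        = ∏ j, (n j * α + y j * γ + x j * β) := Finset.prod_congr rfl fun j _ => by ring
      _ = ∏ j, (m j * α + y j * γ + x j * β) := key α γ β
      _ = ∏ j, (m j * α + x j * β + y j * γ) := Finset.prod_congr rfl fun j _ => by ring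
  refine ⟨part1, part2, ?_⟩
  intro heq
  apply hnot1
  have hb0 : s 0 ≠ 0 := part1 0
  have hgb : s (s 0) ≠ s 0 := part1 (s 0)
  have hg0 : s (s 0) ≠ 0 := by
    intro h
    obtain ⟨w, hw1, hw2⟩ := third3 0 (s 0) (Ne.symm hb0)
    have h1w : s w ≠ w := part1 w
    have h2w : s w ≠ s 0 := fun hh => hw1 (s.injective hh).symm
    have h3w : s w ≠ 0 := fun hh => hw2 (s.injective (hh.trans h.symm)).symm
    rcases mem3 0 (s 0) w (s w) (Ne.symm hb0) hw1 hw2 with h'|h'|h' <;> contradiction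
  have hsg : s (s (s 0)) = 0 := by
    have hne1 : s (s (s 0)) ≠ s (s 0) := part1 (s (s 0))
    have hne2 : s (s (s 0)) ≠ s 0 := fun hh => hg0 (s.injective hh)
    rcases mem3 0 (s 0) (s (s 0)) (s (s (s 0))) (Ne.symm hb0) (Ne.symm hg0) (Ne.symm hgb)
      with h'|h'|h' <;> first | exact h' | contradiction
  have hx' : ∀ i, x i = c i * x (s i) := by rw [heq]; exact hx
  have hnc' : ∀ i, kk i * n (s i) = c i * n (s i) := by
    intro i; have h5 := hnc i; rwa [← heq] at h5
  have hk1' : kk 0 * kk (s 0) * kk (s (s 0)) = 1 := by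
    rw [← prod3 kk 0 (s 0) (s (s 0)) (Ne.symm hb0) (Ne.symm hg0) (Ne.symm hgb)]; exact hk1
  have hc1' : c 0 * c (s 0) * c (s (s 0)) = 1 := by
    rw [← prod3 c 0 (s 0) (s (s 0)) (Ne.symm hb0) (Ne.symm hg0) (Ne.symm hgb)]; exact hc1
  intro α β γ
  rw [prod3 _ 0 (s 0) (s (s 0)) (Ne.symm hb0) (Ne.symm hg0) (Ne.symm hgb),
      prod3 _ 0 (s 0) (s (s 0)) (Ne.symm hb0) (Ne.symm hg0) (Ne.symm hgb)]
  exact keyC n x y m kk c 0 (s 0) (s (s 0))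
    (hy 0) (hy (s 0)) (by have h5 := hy (s (s 0)); rwa [hsg] at h5)
    (hx' 0) (hx' (s 0)) (by have h5 := hx' (s (s 0)); rwa [hsg] at h5)
    (hm 0) (hm (s 0)) (by have h5 := hm (s (s 0)); rwa [hsg] at h5)
    (hnc' 0) (hnc' (s 0)) (by have h5 := hnc' (s (s 0)); rwa [hsg] at h5)
    hk1' hc1' α β γ
end
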